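/- arXiv:2401.13183 — 5 statements merged into one kernel-verified Lean document; each statement's English description precedes it below -/
import Mathlib

section
/- The function G(x) = x^φ on [0,1], where φ = (1+√5)/2, satisfies the fixed point property of the Lorenz operator: (∫₀ˣ G⁻¹(u) du)/(∫₀¹ G⁻¹(u) du) = G(x) for all x ∈ [0,1], where G⁻¹(u) = u^{1/φ}. -/
open Real

theorem intervalIntegral.integral_rpow_div_integral_rpow_zero_one {a : ℝ} (ha : -1 < a) (x : ℝ) :
    (∫ u in (0:ℝ)..x, u ^ a) / (∫ u in (0:ℝ)..1, u ^ a) = x ^ (a + 1) := by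
  have ha1 : a + 1 ≠ 0 := by linarith
  rw [integral_rpow (Or.inl ha), integral_rpow (Or.inl ha), one_rpow, zero_rpow ha1]
  field_simp
  ring

theorem Real.inv_goldenRatio_add_one : goldenRatio⁻¹ + 1 = goldenRatio := by
  rw [inv_goldenRatio, ← one_sub_goldenConj]
  ring

theorem power_law_fixed_point_of_lorenz :
    let φ : ℝ := (1 + Real.sqrt 5) / 2
    ∀ x ∈ Set.Icc (0:ℝ) 1,
      (∫ u in (0:ℝ)..x, u ^ (1 / φ)) / (∫ u in (0:ℝ)..1, u ^ (1 / φ)) =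
        x ^ φ := by
  intro φ x _
  have hφ_inv : -1 < φ⁻¹ := by linarith [inv_pos.2 goldenRatio_pos]
  rw [one_div, intervalIntegral.integral_rpow_div_integral_rpow_zero_one hφ_inv,
    inv_goldenRatio_add_one]
end

section
/- The function g(x) = x^{1/φ} on [0,1], where φ = (1+√5)/2, satisfies the integro-differential equation g'(x) = μ / g(g(x)) for x ∈ (0,1), where μ = g'(1) = 1/φ, with g(0) = 0 and g(1) = 1. -/
open Real

theorem inv_goldenRatio_mul_self_add_self :
    goldenRatio⁻¹ * goldenRatio⁻¹ + goldenRatio⁻¹ = 1 := by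
  rw [inv_goldenRatio, neg_mul_neg, ← sq, goldenConj_sq]
  ring

/-- `p² + p = 1` makes `(x ^ p) ^ p = x ^ (1 - p)`, turning the derivative `p * x ^ (p - 1)` into
`p / (x ^ p) ^ p`. -/
theorem hasDerivAt_rpow_div_rpow_rpow {p x : ℝ} (hp : p * p + p = 1) (hx : 0 < x) :
    HasDerivAt (fun y : ℝ => y ^ p) (p / (x ^ p) ^ p) x := by
  have hcomp : (x ^ p) ^ p = x ^ (1 - p) := by
    rw [← rpow_mul hx.le]
    congr 1
    linarith
  convert hasDerivAt_rpow_const (p := p) (Or.inl hx.ne') using 1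
  rw [hcomp, div_eq_mul_inv, ← rpow_neg hx.le, neg_sub]

theorem power_law_solves_integro_differential_equation :
    let φ : ℝ := (1 + Real.sqrt 5) / 2
    let g : ℝ → ℝ := fun x => x ^ (1 / φ)
    let μ : ℝ := 1 / φ
    g 0 = 0 ∧ g 1 = 1 ∧ deriv g 1 = μ ∧
      ∀ x ∈ Set.Ioo (0:ℝ) 1, HasDerivAt g (μ / g (g x)) x := by
  intro φ g μ
  have hp : μ * μ + μ = 1 := by simpa [μ, φ, goldenRatio] using inv_goldenRatio_mul_self_add_self
  have hg : ∀ x : ℝ, 0 < x → HasDerivAt g (μ / g (g x)) x :=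
    fun x hx => hasDerivAt_rpow_div_rpow_rpow hp hx
  refine ⟨zero_rpow (by positivity), one_rpow _, ?_, fun x hx => hg x hx.1⟩
  simpa [g] using (hg 1 one_pos).deriv
end

section
/- The function f(x) = c·x^φ with c = φ^{-1/φ} and φ = (1+√5)/2 satisfies the functional differential equation f'(x) = f⁻¹(x) for all x > 0, where f⁻¹ denotes the inverse function of f, and f(0) = 0. -/
/-! The derivative of `c x^φ` is `c φ x^(φ-1)`, and raising it to the power `φ` undoes the
exponent `φ - 1 = φ⁻¹`. Both constants cancel because `φ⁻¹ + φ⁻² = 1`: indeed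
`c φ = φ^(φ⁻²)` and `(φ^(φ⁻²))^φ = φ^(φ⁻¹) = c⁻¹`. Hence `f (f' x) = x`, i.e. `f' = f⁻¹`. -/

open Real goldenRatio

namespace Real

theorem inv_goldenRatio_eq_sub_one : φ⁻¹ = φ - 1 := by
  rw [inv_goldenRatio, ← one_sub_goldenConj, neg_sub]

theorem goldenRatio_rpow_neg_inv_mul_self : φ ^ (-φ⁻¹) * φ = φ ^ (φ⁻¹ ^ 2) := by
  have hexp : -φ⁻¹ + 1 = φ⁻¹ ^ 2 := by
    rw [inv_goldenRatio_eq_sub_one]; nlinarith [goldenRatio_sq]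
  rw [← hexp, rpow_add goldenRatio_pos, rpow_one]

theorem deriv_goldenRatio_rpow_neg_inv_mul_rpow (x : ℝ) :
    deriv (fun x : ℝ => φ ^ (-φ⁻¹) * x ^ φ) x = φ ^ (φ⁻¹ ^ 2) * x ^ (φ - 1) := by
  rw [deriv_const_mul_field, deriv_rpow_const, ← mul_assoc, goldenRatio_rpow_neg_inv_mul_self]

theorem goldenRatio_rpow_neg_inv_mul_rpow_of_deriv {x : ℝ} (hx : 0 ≤ x) :
    φ ^ (-φ⁻¹) * (φ ^ (φ⁻¹ ^ 2) * x ^ (φ - 1)) ^ φ = x := by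
  have hφ := goldenRatio_pos
  have hsq : φ⁻¹ ^ 2 * φ = φ⁻¹ := by field_simp
  have hsub : (φ - 1) * φ = 1 := by rw [← inv_goldenRatio_eq_sub_one, inv_mul_cancel₀ hφ.ne']
  rw [mul_rpow (by positivity) (by positivity), ← rpow_mul hφ.le, ← rpow_mul hx, hsq, hsub,
    rpow_one, ← mul_assoc, ← rpow_add hφ, neg_add_cancel, rpow_zero, one_mul]

end Real

theorem golden_power_solves_f_prime_eq_f_inverse_general
    (finv : ℝ → ℝ)
    (hleft : ∀ x ∈ Set.Ici (0:ℝ),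
      finv (((1 + Real.sqrt 5) / 2) ^ (-(1 / ((1 + Real.sqrt 5) / 2))) *
        x ^ ((1 + Real.sqrt 5) / 2)) = x) :
    (((1 + Real.sqrt 5) / 2) ^ (-(1 / ((1 + Real.sqrt 5) / 2))) *
      (0:ℝ) ^ ((1 + Real.sqrt 5) / 2) = 0) ∧
    ∀ x : ℝ, 0 < x →
      deriv (fun x : ℝ => ((1 + Real.sqrt 5) / 2) ^ (-(1 / ((1 + Real.sqrt 5) / 2))) *
        x ^ ((1 + Real.sqrt 5) / 2)) x = finv x := by
  change φ ^ (-(1 / φ)) * (0:ℝ) ^ φ = 0 ∧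
    ∀ x : ℝ, 0 < x → deriv (fun x : ℝ => φ ^ (-(1 / φ)) * x ^ φ) x = finv x
  simp only [one_div] at hleft ⊢
  refine ⟨by rw [zero_rpow goldenRatio_ne_zero, mul_zero], fun x hx => ?_⟩
  have hfinv := hleft _ (Set.mem_Ici.2 (by positivity : 0 ≤ φ ^ (φ⁻¹ ^ 2) * x ^ (φ - 1)))
  rw [goldenRatio_rpow_neg_inv_mul_rpow_of_deriv hx.le] at hfinv
  rw [deriv_goldenRatio_rpow_neg_inv_mul_rpow, hfinv]

theorem golden_power_solves_f_prime_eq_f_inverse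
    (finv : ℝ → ℝ)
    (hleft : ∀ x ∈ Set.Ici (0:ℝ),
      finv (((1 + Real.sqrt 5) / 2) ^ (-(1 / ((1 + Real.sqrt 5) / 2))) *
        x ^ ((1 + Real.sqrt 5) / 2)) = x)
    (hright : ∀ y ∈ Set.Ici (0:ℝ),
      ((1 + Real.sqrt 5) / 2) ^ (-(1 / ((1 + Real.sqrt 5) / 2))) *
        (finv y) ^ ((1 + Real.sqrt 5) / 2) = y) :
    (((1 + Real.sqrt 5) / 2) ^ (-(1 / ((1 + Real.sqrt 5) / 2))) *
      (0:ℝ) ^ ((1 + Real.sqrt 5) / 2) = 0) ∧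
    ∀ x : ℝ, 0 < x →
      deriv (fun x : ℝ => ((1 + Real.sqrt 5) / 2) ^ (-(1 / ((1 + Real.sqrt 5) / 2))) *
        x ^ ((1 + Real.sqrt 5) / 2)) x = finv x :=
  golden_power_solves_f_prime_eq_f_inverse_general finv hleft
end

section
/- Applying the Lorenz operator to the power-law distribution F(x) = x^φ on [0,1], where φ = (1+√5)/2, yields the same distribution: L_F(x) = x^φ. -/
theorem lorenz_of_power_law_is_itself :
    let φ : ℝ := (1 + Real.sqrt 5) / 2
    let Finv : ℝ → ℝ := fun u => u ^ (1 / φ)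
    ∀ x ∈ Set.Icc (0:ℝ) 1,
      (∫ u in (0:ℝ)..x, Finv u) / (∫ u in (0:ℝ)..1, Finv u) = x ^ φ := by
  intro φ Finv x hx
  have h5 : Real.sqrt 5 ^ 2 = 5 := Real.sq_sqrt (by norm_num)
  have hs : (1:ℝ) < Real.sqrt 5 := by
    nlinarith [Real.sqrt_nonneg 5]
  have hφ : (0:ℝ) < φ := by simp only [φ]; linarith
  have hsq : φ ^ 2 = φ + 1 := by
    simp only [φ]; nlinarith
  have hkey : 1 / φ + 1 = φ := by
    field_simp
    nlinarith
  have hr : (-1:ℝ) < 1 / φ := by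
    have : 0 < 1 / φ := by positivity
    linarith
  have hint : ∀ y : ℝ, (∫ u in (0:ℝ)..y, u ^ (1/φ)) = y ^ (1/φ + 1) / (1/φ + 1) :=
    fun y => by
      rw [integral_rpow (Or.inl hr), Real.zero_rpow (by linarith), sub_zero]
  simp only [Finv, hint, hkey, Real.one_rpow]
  field_simp
end

section
/- For any continuous strictly increasing convex function L : [0,1] → [0,1] with L(0)=0, L(1)=1, one iteration of the Lorenz operator satisfies x² ≤ L₁(x) ≤ x for all x ∈ [0,1], where L₁(x) = (∫₀ˣ L⁻¹(u) du)/(∫₀¹ L⁻¹(u) du). -/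
/-!
Write `G` for the inverse of `L`; it is monotone on `[0, 1]`. Convexity of `L` together with
`L 0 = 0` gives `L (x * y) ≤ x * L y`, which for the inverse becomes `x * G v ≤ G (x * v)`.
Substituting `u = x * v` then yields `∫₀ˣ G = x ∫₀¹ G (x v) dv ≥ x² ∫₀¹ G`. The upper bound
`∫₀ˣ G ≤ x ∫₀¹ G` only uses monotonicity: the mean of a monotone function over `[0, x]` is at
most its mean over `[0, 1]`.
-/

open Set MeasureTheory intervalIntegral

theorem ConvexOn.map_smul_le_smul_of_map_zero {𝕜 E β : Type*} [Field 𝕜] [LinearOrder 𝕜]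
    [IsStrictOrderedRing 𝕜] [AddCommGroup E] [Module 𝕜 E] [AddCommMonoid β] [PartialOrder β]
    [Module 𝕜 β] {s : Set E} {f : E → β} (hf : ConvexOn 𝕜 s f) (hs : (0 : E) ∈ s)
    (hf0 : f 0 = 0) {y : E} (hy : y ∈ s) {t : 𝕜} (ht0 : 0 ≤ t) (ht1 : t ≤ 1) :
    f (t • y) ≤ t • f y := by
  simpa [hf0] using hf.2 hy hs ht0 (sub_nonneg.2 ht1) (add_sub_cancel t 1)

theorem MonotoneOn.intervalIntegrable_of_mem_Icc {μ : Measure ℝ} [IsLocallyFiniteMeasure μ]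
    {G : ℝ → ℝ} {a b c d : ℝ} (hG : MonotoneOn G (Icc a b)) (hc : c ∈ Icc a b)
    (hd : d ∈ Icc a b) : IntervalIntegrable G μ c d :=
  (hG.mono (uIcc_subset_Icc hc hd)).intervalIntegrable

theorem mul_integral_le_mul_integral_of_monotoneOn {G : ℝ → ℝ} {b x : ℝ}
    (hG : MonotoneOn G (Icc 0 b)) (hx : x ∈ Icc 0 b) :
    b * ∫ u in (0 : ℝ)..x, G u ≤ x * ∫ u in (0 : ℝ)..b, G u := by
  have h0 : (0 : ℝ) ∈ Icc 0 b := ⟨le_rfl, hx.1.trans hx.2⟩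
  have hb : b ∈ Icc 0 b := ⟨h0.2, le_rfl⟩
  have hint₁ := hG.intervalIntegrable_of_mem_Icc (μ := volume) h0 hx
  have hint₂ := hG.intervalIntegrable_of_mem_Icc (μ := volume) hx hb
  have hleft : ∫ u in (0 : ℝ)..x, G u ≤ x * G x := by
    simpa using integral_mono_on hx.1 hint₁ intervalIntegrable_const
      fun u hu ↦ hG ⟨hu.1, hu.2.trans hx.2⟩ hx hu.2
  have hright : (b - x) * G x ≤ ∫ u in x..b, G u := by
    simpa [mul_comm] using integral_mono_on hx.2 intervalIntegrable_const hint₂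
      fun u hu ↦ hG hx ⟨hx.1.trans hu.1, hu.2⟩ hu.1
  rw [← integral_add_adjacent_intervals hint₁ hint₂]
  nlinarith [mul_le_mul_of_nonneg_left hleft (sub_nonneg.2 hx.2),
    mul_le_mul_of_nonneg_left hright hx.1]

theorem sq_mul_integral_le_integral_of_mul_le {G : ℝ → ℝ} {x : ℝ}
    (hG : MonotoneOn G (Icc 0 1)) (hx : x ∈ Icc 0 1)
    (hstar : ∀ v ∈ Icc (0 : ℝ) 1, x * G v ≤ G (x * v)) :
    x ^ 2 * ∫ u in (0 : ℝ)..1, G u ≤ ∫ u in (0 : ℝ)..x, G u := by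
  have hG01 := hG.intervalIntegrable_of_mem_Icc (μ := volume) unitInterval.zero_mem
    unitInterval.one_mem
  have hGx : MonotoneOn (fun v ↦ G (x * v)) (uIcc 0 1) := by
    rw [uIcc_of_le zero_le_one]
    exact fun u hu v hv huv ↦ hG (unitInterval.mul_mem hx hu) (unitInterval.mul_mem hx hv)
      (mul_le_mul_of_nonneg_left huv hx.1)
  calc x ^ 2 * ∫ u in (0 : ℝ)..1, G u = x * ∫ v in (0 : ℝ)..1, x * G v := by
        rw [intervalIntegral.integral_const_mul]; ring
    _ ≤ x * ∫ v in (0 : ℝ)..1, G (x * v) :=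
        mul_le_mul_of_nonneg_left
          (integral_mono_on zero_le_one (hG01.const_mul x) hGx.intervalIntegrable hstar) hx.1
    _ = ∫ u in (0 : ℝ)..x, G u := by
        rw [← smul_eq_mul, smul_integral_comp_mul_left, mul_zero, mul_one]

theorem one_lorenz_iteration_bounds_general
    (L Linv : ℝ → ℝ)
    (hmono : StrictMonoOn L (Set.Icc 0 1))
    (hconv : ConvexOn ℝ (Set.Icc 0 1) L)
    (hmaps : Set.MapsTo L (Set.Icc 0 1) (Set.Icc 0 1))
    (h0 : L 0 = 0) (h1 : L 1 = 1)
    (hinvmaps : Set.MapsTo Linv (Set.Icc 0 1) (Set.Icc 0 1))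
    (hleft : ∀ x ∈ Set.Icc (0:ℝ) 1, Linv (L x) = x)
    (hright : ∀ x ∈ Set.Icc (0:ℝ) 1, L (Linv x) = x) :
    ∀ x ∈ Set.Icc (0:ℝ) 1,
      x ^ 2 ≤ (∫ u in (0:ℝ)..x, Linv u) / (∫ u in (0:ℝ)..1, Linv u) ∧
      (∫ u in (0:ℝ)..x, Linv u) / (∫ u in (0:ℝ)..1, Linv u) ≤ x := by
  have hG : MonotoneOn Linv (Icc 0 1) :=
    Function.monotoneOn_of_rightInvOn_of_mapsTo hmono.monotoneOn hright hinvmaps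
  have hstar : ∀ x ∈ Icc (0 : ℝ) 1, ∀ v ∈ Icc (0 : ℝ) 1, x * Linv v ≤ Linv (x * v) := by
    intro x hx v hv
    have hxGv := unitInterval.mul_mem hx (hinvmaps hv)
    have hL : L (x * Linv v) ≤ x * v := by
      simpa [hright v hv] using hconv.map_smul_le_smul_of_map_zero unitInterval.zero_mem h0
        (hinvmaps hv) hx.1 hx.2
    simpa [hleft _ hxGv] using hG (hmaps hxGv) (unitInterval.mul_mem hx hv) hL
  have hG1 : Linv 1 = 1 := by simpa [h1] using hleft 1 unitInterval.one_mem
  have hIpos : 0 < ∫ u in (0 : ℝ)..1, Linv u := by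
    have hid : ∫ u in (0 : ℝ)..1, u ≤ ∫ u in (0 : ℝ)..1, Linv u :=
      integral_mono_on zero_le_one intervalIntegrable_id
        (hG.intervalIntegrable_of_mem_Icc unitInterval.zero_mem unitInterval.one_mem)
        fun u hu ↦ by simpa [hG1] using hstar u hu 1 unitInterval.one_mem
    rw [integral_id] at hid
    linarith
  intro x hx
  rw [le_div_iff₀ hIpos, div_le_iff₀ hIpos]
  exact ⟨sq_mul_integral_le_integral_of_mul_le hG hx (hstar x hx),
    by simpa using mul_integral_le_mul_integral_of_monotoneOn hG hx⟩

theorem one_lorenz_iteration_bounds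
    (L Linv : ℝ → ℝ)
    (hcont : ContinuousOn L (Set.Icc 0 1))
    (hmono : StrictMonoOn L (Set.Icc 0 1))
    (hconv : ConvexOn ℝ (Set.Icc 0 1) L)
    (hmaps : Set.MapsTo L (Set.Icc 0 1) (Set.Icc 0 1))
    (h0 : L 0 = 0) (h1 : L 1 = 1)
    (hinvmaps : Set.MapsTo Linv (Set.Icc 0 1) (Set.Icc 0 1))
    (hleft : ∀ x ∈ Set.Icc (0:ℝ) 1, Linv (L x) = x)
    (hright : ∀ x ∈ Set.Icc (0:ℝ) 1, L (Linv x) = x) :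
    ∀ x ∈ Set.Icc (0:ℝ) 1,
      x ^ 2 ≤ (∫ u in (0:ℝ)..x, Linv u) / (∫ u in (0:ℝ)..1, Linv u) ∧
      (∫ u in (0:ℝ)..x, Linv u) / (∫ u in (0:ℝ)..1, Linv u) ≤ x :=
  one_lorenz_iteration_bounds_general L Linv hmono hconv hmaps h0 h1 hinvmaps hleft hright
end
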